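/- arXiv:2401.03756 — 2 statements merged into one kernel-verified Lean document; each statement's English description precedes it below -/
import Mathlib

section
/- Let K ≥ 2, σ : Fin K → ℝ positive, and let E be the simplex of probability vectors e on Fin K. Then sup_{e ∈ E} inf_{w ∈ W} ∑_a e(a) √((σ a)²/(w a)) ≥ inf_{w ∈ W'} max_a √((σ a)²/(w a)), where W is the open simplex (all coordinates in (0,1) summing to 1) and W' is its closure. Moreover the right-hand side equals √(∑_a (σ a)²). -/
/-!
With `S = ∑ a, σ a ^ 2`, the allocation `w a = σ a ^ 2 / S` equalises all arms at `√S`, and no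
allocation does better, since some arm must have `w a ≤ σ a ^ 2 / S`. For the lower bound on the
sup-inf, take `e a = σ a ^ 2 / S`: convexity of `w ↦ √(σ ^ 2 / w)` gives, arm by arm, a tangent-line
bound at `w = σ ^ 2 / S`, and summing these tangent lines shows `∑ a, e a * √(σ a ^ 2 / w a) ≥ √S`
for every allocation `w`.
-/

open Finset

section

variable {ι : Type*} [Fintype ι]

theorem mul_three_mul_sq_sub_le_sq_mul_sqrt_sq_div {c s w : ℝ} (hs : 0 ≤ s) (hw : 0 < w) :
    s * (3 * c ^ 2 - s ^ 2 * w) / 2 ≤ c ^ 2 * √(c ^ 2 / w) := by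
  obtain ⟨u, hu, rfl⟩ : ∃ u, 0 < u ∧ w = u ^ 2 :=
    ⟨√w, Real.sqrt_pos.mpr hw, (Real.sq_sqrt hw.le).symm⟩
  rw [Real.sqrt_div' _ hw.le, Real.sqrt_sq_eq_abs, Real.sqrt_sq hu.le, ← sq_abs c, ← mul_div_assoc,
    le_div_iff₀ hu]
  -- `2|c|³ - 3|c|²v + v³ = (v - |c|)²(v + 2|c|)` with `v = s u`
  nlinarith [mul_nonneg (sq_nonneg (s * u - |c|)) (by positivity : 0 ≤ s * u + 2 * |c|)]

theorem sqrt_sum_sq_le_sum_mul_sqrt_sq_div (σ w : ι → ℝ) (hS : 0 < ∑ a, σ a ^ 2)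
    (hw : ∀ a, 0 < w a) (hw1 : ∑ a, w a = 1) :
    √(∑ a, σ a ^ 2) ≤ ∑ a, σ a ^ 2 / (∑ b, σ b ^ 2) * √(σ a ^ 2 / w a) := by
  set S := ∑ a, σ a ^ 2
  have hsq : √S ^ 2 = S := Real.sq_sqrt hS.le
  have tangent : √S * S ≤ ∑ a, σ a ^ 2 * √(σ a ^ 2 / w a) :=
    calc √S * S = ∑ a, √S * (3 * σ a ^ 2 - √S ^ 2 * w a) / 2 := by
          rw [← sum_div, ← mul_sum, sum_sub_distrib, ← mul_sum, ← mul_sum, hw1, hsq]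
          ring
      _ ≤ _ := sum_le_sum fun a _ =>
          mul_three_mul_sq_sub_le_sq_mul_sqrt_sq_div (Real.sqrt_nonneg S) (hw a)
  simp_rw [div_mul_eq_mul_div, ← sum_div]
  rwa [le_div_iff₀ hS]

theorem sqrt_sum_sq_le_iSup_sqrt_sq_div (σ w : ι → ℝ) (hw : ∀ a, 0 < w a)
    (hw1 : ∑ a, w a = 1) : √(∑ a, σ a ^ 2) ≤ ⨆ a, √(σ a ^ 2 / w a) := by
  set S := ∑ a, σ a ^ 2
  have hne : (univ : Finset ι).Nonempty := nonempty_of_sum_ne_zero (by rw [hw1]; exact one_ne_zero)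
  obtain ⟨a, -, ha⟩ : ∃ a ∈ univ, S * w a ≤ σ a ^ 2 :=
    exists_le_of_sum_le hne (by rw [← mul_sum, hw1, mul_one])
  calc √S ≤ √(σ a ^ 2 / w a) := Real.sqrt_le_sqrt ((le_div_iff₀ (hw a)).mpr ha)
    _ ≤ ⨆ b, √(σ b ^ 2 / w b) :=
      le_ciSup (f := fun b => √(σ b ^ 2 / w b)) (Set.finite_range _).bddAbove a

theorem sum_sq_div_sum_sq (σ : ι → ℝ) (hS : ∑ a, σ a ^ 2 ≠ 0) :
    ∑ a, σ a ^ 2 / ∑ b, σ b ^ 2 = 1 := by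
  rw [← sum_div, div_self hS]

theorem iSup_sqrt_sq_div_sq_div_sum_sq [Nonempty ι] (σ : ι → ℝ) (hσ : ∀ a, σ a ≠ 0) :
    ⨆ a, √(σ a ^ 2 / (σ a ^ 2 / ∑ b, σ b ^ 2)) = √(∑ a, σ a ^ 2) := by
  simp_rw [div_div_cancel₀ (pow_ne_zero 2 (hσ _)), ciSup_const]

theorem sInf_iSup_sqrt_sq_div_eq_sqrt_sum_sq [Nonempty ι] (σ : ι → ℝ) (hσ : ∀ a, σ a ≠ 0) :
    sInf {y : ℝ | ∃ w : ι → ℝ, (∀ a, w a ∈ Set.Icc (0 : ℝ) 1) ∧ (∀ a, 0 < w a) ∧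
      (∑ a, w a = 1) ∧ y = ⨆ a, √(σ a ^ 2 / w a)} = √(∑ a, σ a ^ 2) := by
  set A := {y : ℝ | ∃ w : ι → ℝ, (∀ a, w a ∈ Set.Icc (0 : ℝ) 1) ∧ (∀ a, 0 < w a) ∧
    (∑ a, w a = 1) ∧ y = ⨆ a, √(σ a ^ 2 / w a)}
  set S := ∑ a, σ a ^ 2
  have hS : 0 < S := sum_pos (fun a _ => sq_pos_of_ne_zero (hσ a)) univ_nonempty
  have hp : ∀ a, 0 < σ a ^ 2 / S := fun a => div_pos (sq_pos_of_ne_zero (hσ a)) hS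
  have hp1 : ∑ a, σ a ^ 2 / S = 1 := sum_sq_div_sum_sq σ hS.ne'
  have hlow : ∀ y ∈ A, √S ≤ y := by
    rintro y ⟨w, -, hw, hw1, rfl⟩
    exact sqrt_sum_sq_le_iSup_sqrt_sq_div σ w hw hw1
  have hmem : √S ∈ A := ⟨fun a => σ a ^ 2 / S,
    fun a => ⟨(hp a).le, hp1 ▸ single_le_sum (fun b _ => (hp b).le) (mem_univ a)⟩, hp, hp1,
    (iSup_sqrt_sq_div_sq_div_sum_sq σ hσ).symm⟩
  exact le_antisymm (csInf_le ⟨_, hlow⟩ hmem) (le_csInf ⟨_, hmem⟩ hlow)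

theorem sum_mul_le_sum_of_sum_eq_one {e x : ι → ℝ} (he : ∀ a, 0 ≤ e a) (he1 : ∑ a, e a = 1)
    (hx : ∀ a, 0 ≤ x a) : ∑ a, e a * x a ≤ ∑ a, x a :=
  sum_le_sum fun a _ => mul_le_of_le_one_left (hx a)
    (he1 ▸ single_le_sum (fun b _ => he b) (mem_univ a))

end

theorem minimax_step (K : ℕ) (hK : 2 ≤ K) (σ : Fin K → ℝ) (hσ : ∀ a, 0 < σ a) :
    (sInf {y : ℝ | ∃ w : Fin K → ℝ, (∀ a, w a ∈ Set.Icc (0 : ℝ) 1) ∧ (∀ a, 0 < w a) ∧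
          (∑ a, w a = 1) ∧ y = ⨆ a, Real.sqrt ((σ a) ^ 2 / w a)}
        ≤ sSup {x : ℝ | ∃ e : Fin K → ℝ, (∀ a, 0 ≤ e a) ∧ (∑ a, e a = 1) ∧
          x = sInf {y : ℝ | ∃ w : Fin K → ℝ, (∀ a, w a ∈ Set.Ioo (0 : ℝ) 1) ∧
            (∑ a, w a = 1) ∧ y = ∑ a, e a * Real.sqrt ((σ a) ^ 2 / w a)}}) ∧
    sInf {y : ℝ | ∃ w : Fin K → ℝ, (∀ a, w a ∈ Set.Icc (0 : ℝ) 1) ∧ (∀ a, 0 < w a) ∧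
          (∑ a, w a = 1) ∧ y = ⨆ a, Real.sqrt ((σ a) ^ 2 / w a)}
      = Real.sqrt (∑ a, (σ a) ^ 2) := by
  have : Nonempty (Fin K) := Fin.pos_iff_nonempty.mp (by omega)
  set S := ∑ a, σ a ^ 2
  have hS : 0 < S := sum_pos (fun a _ => pow_pos (hσ a) 2) univ_nonempty
  have hp1 : ∑ a, σ a ^ 2 / S = 1 := sum_sq_div_sum_sq σ hS.ne'
  have hu : ∀ _ : Fin K, (K : ℝ)⁻¹ ∈ Set.Ioo (0 : ℝ) 1 := fun _ =>
    ⟨by positivity, inv_lt_one_of_one_lt₀ (by exact_mod_cast hK)⟩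
  have hu1 : ∑ _ : Fin K, (K : ℝ)⁻¹ = 1 := by
    rw [sum_const, card_univ, Fintype.card_fin, nsmul_eq_mul, mul_inv_cancel₀ (by positivity)]
  have hA := sInf_iSup_sqrt_sq_div_eq_sqrt_sum_sq σ fun a => (hσ a).ne'
  refine ⟨hA.le.trans ?_, hA⟩
  refine le_csSup_of_le ⟨∑ a, √(σ a ^ 2 / (K : ℝ)⁻¹), ?_⟩
    ⟨fun a => σ a ^ 2 / S, fun a => by positivity, hp1, rfl⟩ (le_csInf ⟨_, _, hu, hu1, rfl⟩ ?_)
  · rintro x ⟨e, he, he1, rfl⟩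
    refine csInf_le_of_le ⟨0, ?_⟩ ⟨_, hu, hu1, rfl⟩
      (sum_mul_le_sum_of_sum_eq_one he he1 fun a => Real.sqrt_nonneg _)
    rintro y ⟨w, -, -, rfl⟩
    exact sum_nonneg fun a _ => mul_nonneg (he a) (Real.sqrt_nonneg _)
  · rintro y ⟨w, hw, hw1, rfl⟩
    exact sqrt_sum_sq_le_sum_mul_sqrt_sq_div σ w hS (fun a => (hw a).1) hw1
end

section
/- Let σ : Fin K → ℝ with σ a > 0, and define f : {w : Fin K → ℝ // (∀ a, 0 < w a) ∧ ∑ a, w a = 1} → ℝ by f(w) = max_a (σ a)/√(w a). Then f(w) ≥ √(∑_a (σ a)²) for all feasible w, with equality iff w a = (σ a)²/∑_b (σ b)². -/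
open Finset

theorem allocation_lower_bound_and_equality (K : ℕ) (hK : 0 < K)
    (σ : Fin K → ℝ) (hσ : ∀ a, 0 < σ a)
    (w : Fin K → ℝ) (hw : ∀ a, 0 < w a) (hsum : ∑ a, w a = 1) :
    Real.sqrt (∑ a, (σ a) ^ 2) ≤ ⨆ a, σ a / Real.sqrt (w a) ∧
    ((⨆ a, σ a / Real.sqrt (w a)) = Real.sqrt (∑ a, (σ a) ^ 2)
      ↔ ∀ a, w a = (σ a) ^ 2 / ∑ b, (σ b) ^ 2) := by
  haveI : Nonempty (Fin K) := ⟨⟨0, hK⟩⟩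
  set S := ∑ a, (σ a) ^ 2 with hS
  have hSpos : 0 < S := Finset.sum_pos (fun a _ => pow_pos (hσ a) 2) Finset.univ_nonempty
  set M := ⨆ a, σ a / Real.sqrt (w a) with hM
  have hle : ∀ a, σ a / Real.sqrt (w a) ≤ M := by
    intro a
    exact le_ciSup (Set.Finite.bddAbove (Set.finite_range fun a => σ a / Real.sqrt (w a))) a
  have hMpos : 0 < M := lt_of_lt_of_le
    (div_pos (hσ (Classical.arbitrary _)) (Real.sqrt_pos.mpr (hw _))) (hle _)
  have hsq : ∀ a, σ a ^ 2 ≤ M ^ 2 * w a := by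
    intro a
    have h1 : σ a ≤ M * Real.sqrt (w a) :=
      (div_le_iff₀ (Real.sqrt_pos.mpr (hw a))).mp (hle a)
    calc σ a ^ 2 ≤ (M * Real.sqrt (w a)) ^ 2 := pow_le_pow_left₀ (hσ a).le h1 2
      _ = M ^ 2 * w a := by rw [mul_pow, Real.sq_sqrt (hw a).le]
  have hSM : S ≤ M ^ 2 := by
    calc S ≤ ∑ a, M ^ 2 * w a := Finset.sum_le_sum (fun a _ => hsq a)
      _ = M ^ 2 := by rw [← Finset.mul_sum, hsum, mul_one]
  have hlow : Real.sqrt S ≤ M := by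
    rw [show M = Real.sqrt (M ^ 2) from (Real.sqrt_sq hMpos.le).symm]
    exact Real.sqrt_le_sqrt hSM
  refine ⟨hlow, ?_, ?_⟩
  · intro hEq
    have hM2 : M ^ 2 = S := by
      rw [hEq]; exact Real.sq_sqrt hSpos.le
    have hall : ∀ a, σ a ^ 2 = S * w a := by
      by_contra h
      push_neg at h
      obtain ⟨a, ha⟩ := h
      have hlt : σ a ^ 2 < S * w a := lt_of_le_of_ne (hM2 ▸ hsq a) ha
      have : S < S := by
        calc S = ∑ b, σ b ^ 2 := rfl
          _ < ∑ b, S * w b :=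
            Finset.sum_lt_sum (fun b _ => hM2 ▸ hsq b) ⟨a, Finset.mem_univ a, hlt⟩
          _ = S := by rw [← Finset.mul_sum, hsum, mul_one]
      exact lt_irrefl _ this
    intro a
    rw [eq_div_iff hSpos.ne', mul_comm, ← hall a]
  · intro h
    have hterm : ∀ a, σ a / Real.sqrt (w a) = Real.sqrt S := by
      intro a
      have hwa : Real.sqrt (w a) = σ a / Real.sqrt S := by
        rw [h a, Real.sqrt_div (sq_nonneg _), Real.sqrt_sq (hσ a).le]
      rw [hwa]
      have hσa := (hσ a).ne'
      have hsS := (Real.sqrt_pos.mpr hSpos).ne'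
      field_simp
    rw [hM]
    calc (⨆ a, σ a / Real.sqrt (w a)) = ⨆ _ : Fin K, Real.sqrt S := by
          congr 1; funext a; exact hterm a
      _ = Real.sqrt S := ciSup_const
end
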